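/- arXiv:1812.07243 — 3 statements merged into one kernel-verified Lean document; each statement's English description precedes it below -/
import Mathlib

section
/- Let (K, d) be a compact metric space and Φ ⊆ C(K) a Banach space separating points of K with α‖·‖_Φ ≥ ‖·‖_∞ for some α > 0. For x ∈ K, let Ω_x = {f ∈ ΦC(K) : f(x) = max_K f}, where ΦC(K) is the space of Φ-convex upper semicontinuous functions on K. Then Ω_x is a nonempty closed cone in (ΦC(K), ρ_∞), and there exists a Φ-extremal point e of K with Ω_x ⊆ Ω_e. -/
/-- a is F-between y and z for a family F of real functions. -/
def PhiBetween {K : Type*} (F : Set (K → ℝ)) (a y z : K) : Prop :=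
  ∀ φ ∈ F, φ y ≤ φ a → φ z ≤ φ a → φ a = φ y ∧ φ a = φ z

/-- e is an F-extremal point of the set A. -/
def PhiExtremalIn {K : Type*} (F : Set (K → ℝ)) (A : Set K) (e : K) : Prop :=
  e ∈ A ∧ ∀ y ∈ A, ∀ z ∈ A, PhiBetween F e y z → y = e ∧ z = e

/-- f is F-convex. -/
def PhiConvex {K : Type*} (F : Set (K → ℝ)) (f : K → ℝ) : Prop :=
  ∀ a x y : K, PhiBetween F a x y → f x ≤ f a → f y ≤ f a →
    f x = f a ∧ f y = f a

/-- the metric of uniform convergence. -/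
noncomputable def rho {K : Type*} (f g : K → ℝ) : ℝ :=
  ⨆ x : K, |f x - g x| / (1 + |f x - g x|)

/-- U is open in B for the metric rho. -/
def RhoOpenIn {K : Type*} (B U : Set (K → ℝ)) : Prop :=
  U ⊆ B ∧ ∀ f ∈ U, ∃ ε > 0, ∀ g ∈ B, rho f g < ε → g ∈ U

/-!
Call `S ⊆ K` a `Φ`-face if it contains every pair `y, z` of which
some point of `S` is `Φ`-between. The common maximizers of the functions of `Ω_x` form a
closed nonempty face. By compactness and Zorn it contains a minimal closed nonempty face `m`.
For `φ ∈ Φ` the maximizers of `φ` on `m` are again a closed nonempty face, so by minimality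
`φ` is constant on `m`; as `Φ` separates points, `m = {e}`, and `e` is `Φ`-extremal.
-/

open Set

section Rho

variable {K : Type*}

lemma abs_sub_div_one_add_le_rho (f g : K → ℝ) (z : K) :
    |f z - g z| / (1 + |f z - g z|) ≤ rho f g := by
  refine le_ciSup (f := fun x => |f x - g x| / (1 + |f x - g x|)) ⟨1, ?_⟩ z
  rintro _ ⟨w, rfl⟩
  have hw : 0 ≤ |f w - g w| := abs_nonneg _
  rw [div_le_one (by linarith)]
  linarith

lemma abs_sub_lt_of_rho_lt {f g : K → ℝ} {s : ℝ} (hs : 0 < s) (h : rho f g < s / (1 + s))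
    (z : K) : |f z - g z| < s := by
  have hlt := (abs_sub_div_one_add_le_rho f g z).trans_lt h
  have hz : 0 ≤ |f z - g z| := abs_nonneg _
  rw [div_lt_div_iff₀ (by linarith) (by linarith)] at hlt
  nlinarith

lemma le_of_forall_exists_rho_lt {f : K → ℝ} {x : K}
    (h : ∀ ε > 0, ∃ g : K → ℝ, (∀ y, g y ≤ g x) ∧ rho f g < ε) (y : K) :
    f y ≤ f x := by
  by_contra! hxy
  set s := (f y - f x) / 2 with hs_def
  have hs : 0 < s := by linarith
  obtain ⟨g, hg, hfg⟩ := h (s / (1 + s)) (div_pos hs (by linarith))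
  have hy := abs_lt.1 (abs_sub_lt_of_rho_lt hs hfg y)
  have hx := abs_lt.1 (abs_sub_lt_of_rho_lt hs hfg x)
  linarith [hg y]

end Rho

section PhiConvex

variable {K : Type*} {F : Set (K → ℝ)}

lemma phiConvex_const (F : Set (K → ℝ)) (c : ℝ) : PhiConvex F (fun _ => c) :=
  fun _ _ _ _ _ _ => ⟨rfl, rfl⟩

lemma PhiConvex.const_mul {f : K → ℝ} (hf : PhiConvex F f) {t : ℝ} (ht : 0 ≤ t) :
    PhiConvex F (fun y => t * f y) := by
  rcases ht.eq_or_lt with rfl | ht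
  · simpa using phiConvex_const F 0
  intro a u v hb hu hv
  obtain ⟨hua, hva⟩ := hf a u v hb (le_of_mul_le_mul_left hu ht) (le_of_mul_le_mul_left hv ht)
  exact ⟨congrArg (t * ·) hua, congrArg (t * ·) hva⟩

lemma phiConvex_of_mem {φ : K → ℝ} (hφ : φ ∈ F) : PhiConvex F φ :=
  fun _ _ _ hb hy hz => (hb φ hφ hy hz).imp Eq.symm Eq.symm

end PhiConvex

lemma UpperSemicontinuous.const_mul_of_nonneg {K : Type*} [TopologicalSpace K] {f : K → ℝ}
    (hf : UpperSemicontinuous f) {t : ℝ} (ht : 0 ≤ t) :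
    UpperSemicontinuous (fun y => t * f y) :=
  (continuous_const_mul t).comp_upperSemicontinuous hf (monotone_mul_left_of_nonneg ht)

section Face

variable {K : Type*} {F : Set (K → ℝ)}

def IsPhiFace (F : Set (K → ℝ)) (S : Set K) : Prop :=
  ∀ e ∈ S, ∀ y z : K, PhiBetween F e y z → y ∈ S ∧ z ∈ S

lemma isPhiFace_sInter {c : Set (Set K)} (hc : ∀ S ∈ c, IsPhiFace F S) :
    IsPhiFace F (⋂₀ c) :=
  fun e he y z hb =>
    ⟨mem_sInter.2 fun S hS => (hc S hS e (he S hS) y z hb).1,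
      mem_sInter.2 fun S hS => (hc S hS e (he S hS) y z hb).2⟩

lemma isPhiFace_setOf_forall_le {G : Set (K → ℝ)} (hG : ∀ f ∈ G, PhiConvex F f) :
    IsPhiFace F {z | ∀ f ∈ G, ∀ y, f y ≤ f z} := by
  intro e he y z hb
  have heq : ∀ f ∈ G, f y = f e ∧ f z = f e := fun f hf =>
    hG f hf e y z hb (he f hf y) (he f hf z)
  exact ⟨fun f hf w => (heq f hf).1 ▸ he f hf w, fun f hf w => (heq f hf).2 ▸ he f hf w⟩

lemma IsPhiFace.sep_forall_le {S : Set K} (hS : IsPhiFace F S) {f : K → ℝ}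
    (hf : PhiConvex F f) :
    IsPhiFace F {z ∈ S | ∀ w ∈ S, f w ≤ f z} := by
  intro e he y z hb
  obtain ⟨hy, hz⟩ := hS e he.1 y z hb
  obtain ⟨hye, hze⟩ := hf e y z hb (he.2 y hy) (he.2 z hz)
  exact ⟨⟨hy, fun w hw => hye ▸ he.2 w hw⟩, ⟨hz, fun w hw => hze ▸ he.2 w hw⟩⟩

lemma IsPhiFace.phiExtremalIn_univ {S : Set K} (hS : IsPhiFace F S) (hsub : S.Subsingleton)
    {e : K} (he : e ∈ S) : PhiExtremalIn F univ e :=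
  ⟨mem_univ e, fun y _ z _ hb =>
    ⟨hsub (hS e he y z hb).1 he, hsub (hS e he y z hb).2 he⟩⟩

variable [TopologicalSpace K]

lemma isClosed_setOf_forall_le {G : Set (K → ℝ)} (hG : ∀ f ∈ G, UpperSemicontinuous f) :
    IsClosed {z | ∀ f ∈ G, ∀ y, f y ≤ f z} := by
  have hA : {z | ∀ f ∈ G, ∀ y, f y ≤ f z} = ⋂ f ∈ G, ⋂ y, f ⁻¹' Ici (f y) := by
    ext; simp
  rw [hA]
  exact isClosed_biInter fun f hf => isClosed_iInter fun y => (hG f hf).isClosed_preimage (f y)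

lemma IsClosed.sep_forall_le {S : Set K} (hS : IsClosed S) {f : K → ℝ} (hf : Continuous f) :
    IsClosed {z ∈ S | ∀ w ∈ S, f w ≤ f z} := by
  have hM : {z ∈ S | ∀ w ∈ S, f w ≤ f z} = S ∩ ⋂ w ∈ S, f ⁻¹' Ici (f w) := by
    ext; simp
  rw [hM]
  exact hS.inter (isClosed_biInter fun w _ => isClosed_Ici.preimage hf)

variable [CompactSpace K]

lemma exists_minimal_isClosed_isPhiFace_subset {S : Set K} (hne : S.Nonempty)
    (hcl : IsClosed S) (hS : IsPhiFace F S) :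
    ∃ m ⊆ S, Minimal (fun s => s.Nonempty ∧ IsClosed s ∧ IsPhiFace F s) m := by
  refine zorn_superset_nonempty _ (fun c hc hchain hcne => ?_) S ⟨hne, hcl, hS⟩
  refine ⟨⋂₀ c, ⟨?_, isClosed_sInter fun U hU => (hc hU).2.1,
    isPhiFace_sInter fun U hU => (hc hU).2.2⟩, fun U hU => sInter_subset_of_mem hU⟩
  have : Nonempty c := hcne.to_subtype
  have hdir : DirectedOn (· ⊇ ·) c := fun a ha b hb =>
    (hchain.total ha hb).elim (fun h => ⟨a, ha, subset_rfl, h⟩)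
      (fun h => ⟨b, hb, h, subset_rfl⟩)
  exact IsCompact.nonempty_sInter_of_directed_nonempty_isCompact_isClosed hdir
    (fun U hU => (hc hU).1) (fun U hU => (hc hU).2.1.isCompact) (fun U hU => (hc hU).2.1)

lemma eq_of_minimal_isClosed_isPhiFace {m : Set K}
    (hm : Minimal (fun s => s.Nonempty ∧ IsClosed s ∧ IsPhiFace F s) m)
    {φ : K → ℝ} (hφF : φ ∈ F) (hφ : Continuous φ) {a b : K} (ha : a ∈ m)
    (hb : b ∈ m) :
    φ a = φ b := by
  obtain ⟨hne, hcl, hface⟩ := hm.prop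
  obtain ⟨e, he, hmax⟩ := hcl.isCompact.exists_isMaxOn hne hφ.continuousOn
  set M := {z ∈ m | ∀ w ∈ m, φ w ≤ φ z}
  have hMm : M = m := (sep_subset _ _).antisymm <| hm.le_of_le
    ⟨⟨e, he, fun w hw => hmax hw⟩, hcl.sep_forall_le hφ,
      hface.sep_forall_le (phiConvex_of_mem hφF)⟩ (sep_subset _ _)
  have haM : a ∈ M := hMm ▸ ha
  have hbM : b ∈ M := hMm ▸ hb
  exact (hbM.2 a ha).antisymm (haM.2 b hb)

theorem IsPhiFace.exists_phiExtremalIn_univ (hFcont : ∀ φ ∈ F, Continuous φ)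
    (hFsep : ∀ x y : K, x ≠ y → ∃ φ ∈ F, φ x ≠ φ y) {S : Set K} (hS : IsPhiFace F S)
    (hne : S.Nonempty) (hcl : IsClosed S) : ∃ e ∈ S, PhiExtremalIn F univ e := by
  obtain ⟨m, hmS, hm⟩ := exists_minimal_isClosed_isPhiFace_subset hne hcl hS
  have hsub : m.Subsingleton := fun a ha b hb => by
    by_contra hab
    obtain ⟨φ, hφF, hφ⟩ := hFsep a b hab
    exact hφ (eq_of_minimal_isClosed_isPhiFace hm hφF (hFcont φ hφF) ha hb)
  obtain ⟨e, he⟩ := hm.prop.1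
  exact ⟨e, hmS he, hm.prop.2.2.phiExtremalIn_univ hsub he⟩

end Face

theorem stmt11_general {K : Type*} [MetricSpace K] [CompactSpace K]
    {Φ : Type*} [NormedAddCommGroup Φ] [NormedSpace ℝ Φ]
    (ι : Φ →ₗ[ℝ] C(K, ℝ))
    (hsep : ∀ x y : K, x ≠ y → ∃ φ : Φ, ι φ x ≠ ι φ y)
    (F : Set (K → ℝ)) (hFdef : F = {g | ∃ φ : Φ, g = ⇑(ι φ)})
    (PhiC : Set (K → ℝ))
    (hPhiC : PhiC = {f | UpperSemicontinuous f ∧ PhiConvex F f})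
    (Ω : K → Set (K → ℝ))
    (hΩ : ∀ z : K, Ω z = {f ∈ PhiC | ∀ y : K, f y ≤ f z})
    (x : K) :
    (Ω x).Nonempty ∧
    (∀ f ∈ PhiC, (∀ ε > (0:ℝ), ∃ g ∈ Ω x, rho f g < ε) → f ∈ Ω x) ∧
    (∀ f ∈ Ω x, ∀ t : ℝ, 0 ≤ t → (fun y => t * f y) ∈ Ω x) ∧
    ∃ e : K, PhiExtremalIn F Set.univ e ∧ Ω x ⊆ Ω e := by
  obtain rfl : Ω = fun z => {f ∈ PhiC | ∀ y : K, f y ≤ f z} := funext hΩ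
  subst hPhiC
  refine ⟨?nonempty, ?closed, ?cone, ?extremal⟩
  case nonempty =>
    exact ⟨fun _ => 0, ⟨upperSemicontinuous_const, phiConvex_const F 0⟩, fun _ => le_rfl⟩
  case closed =>
    refine fun f hf happrox => ⟨hf, le_of_forall_exists_rho_lt fun ε hε => ?_⟩
    obtain ⟨g, hg, hfg⟩ := happrox ε hε
    exact ⟨g, hg.2, hfg⟩
  case cone =>
    rintro f ⟨⟨husc, hconv⟩, hmax⟩ t ht
    exact ⟨⟨husc.const_mul_of_nonneg ht, hconv.const_mul ht⟩,
      fun y => mul_le_mul_of_nonneg_left (hmax y) ht⟩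
  case extremal =>
    have hFcont : ∀ φ ∈ F, Continuous φ := by
      rintro _ hφ
      obtain ⟨φ, rfl⟩ := hFdef ▸ hφ
      exact (ι φ).continuous
    have hFsep : ∀ a b : K, a ≠ b → ∃ φ ∈ F, φ a ≠ φ b := fun a b hab =>
      let ⟨φ, hφ⟩ := hsep a b hab
      ⟨ι φ, hFdef ▸ ⟨φ, rfl⟩, hφ⟩
    obtain ⟨e, he, hext⟩ := IsPhiFace.exists_phiExtremalIn_univ hFcont hFsep
      (isPhiFace_setOf_forall_le fun f (hf : (_ ∧ _) ∧ _) => hf.1.2) ⟨x, fun f hf => hf.2⟩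
      (isClosed_setOf_forall_le fun f (hf : (_ ∧ _) ∧ _) => hf.1.1)
    exact ⟨e, hext, fun f hf => ⟨hf.1, he f hf⟩⟩

theorem stmt11 {K : Type*} [MetricSpace K] [CompactSpace K] [Nonempty K]
    {Φ : Type*} [NormedAddCommGroup Φ] [NormedSpace ℝ Φ] [CompleteSpace Φ]
    (ι : Φ →ₗ[ℝ] C(K, ℝ)) (hinj : Function.Injective ι)
    (α : ℝ) (hα : 0 < α) (hnorm : ∀ φ : Φ, ‖ι φ‖ ≤ α * ‖φ‖)
    (hsep : ∀ x y : K, x ≠ y → ∃ φ : Φ, ι φ x ≠ ι φ y)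
    (F : Set (K → ℝ)) (hFdef : F = {g | ∃ φ : Φ, g = ⇑(ι φ)})
    (PhiC : Set (K → ℝ))
    (hPhiC : PhiC = {f | UpperSemicontinuous f ∧ PhiConvex F f})
    (Ω : K → Set (K → ℝ))
    (hΩ : ∀ z : K, Ω z = {f ∈ PhiC | ∀ y : K, f y ≤ f z})
    (x : K) :
    (Ω x).Nonempty ∧
    (∀ f ∈ PhiC, (∀ ε > (0:ℝ), ∃ g ∈ Ω x, rho f g < ε) → f ∈ Ω x) ∧
    (∀ f ∈ Ω x, ∀ t : ℝ, 0 ≤ t → (fun y => t * f y) ∈ Ω x) ∧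
    ∃ e : K, PhiExtremalIn F Set.univ e ∧ Ω x ⊆ Ω e :=
  stmt11_general ι hsep F hFdef PhiC hPhiC Ω hΩ x
end

section
/- Let X be a nonempty convex compact metrizable subset of a Hausdorff locally convex topological vector space, and let B be the space of all convex continuous functions from X to ℝ equipped with the metric ρ_∞(f,g) = sup_x |f(x)−g(x)|/(1+|f(x)−g(x)|). Then {f ∈ B : f attains its maximum on X at exactly one point, and this point is an extreme point of X} is a dense G_δ subset of (B, ρ_∞). -/
/-- φ is an affine continuous real function on X. -/
def IsAffOn {S : Type*} [AddCommGroup S] [Module ℝ S] [TopologicalSpace S]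
    (X : Set S) (φ : S → ℝ) : Prop :=
  ContinuousOn φ X ∧ ∀ a ∈ X, ∀ b ∈ X, ∀ t : ℝ, t ∈ Set.Icc (0:ℝ) 1 →
    φ (t • a + (1 - t) • b) = t * φ a + (1 - t) * φ b

/-- x is an extreme point of K in the classical sense. -/
def ExtremeIn {S : Type*} [AddCommGroup S] [Module ℝ S]
    (K : Set S) (x : S) : Prop :=
  x ∈ K ∧ ∀ y ∈ K, ∀ z ∈ K, ∀ α : ℝ, 0 < α → α < 1 →
    x = α • y + (1 - α) • z → x = y ∧ x = z

/-- the set of maximizers of f over K. -/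
def KmaxOn {S : Type*} (K : Set S) (f : S → ℝ) : Set S :=
  {x ∈ K | ∀ y ∈ K, f y ≤ f x}

/-- the metric of uniform convergence on X. -/
noncomputable def rhoOn {S : Type*} (X : Set S) (f g : S → ℝ) : ℝ :=
  ⨆ x : X, |f x - g x| / (1 + |f x - g x|)

/-!
A sequence of continuous functionals `ℓ k`, bounded by `2⁻ᵏ` on `X` and separating its points
(Hahn–Banach and second countability of `X × X`), embeds `X` affinely into `ℓ²`. The squared
norm `Q` of this embedding is continuous and strictly convex on `X` with continuous affine
tangents, so any maximiser of `Q - t φ` (`φ` a functional) is exposed by a continuous affine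
function; for `t` large it lies on the far side of a hyperplane separating a maximiser of `f`
from the convex sublevel set `{f ≤ max f - δ}`. If `p` exposes such a point `e` and `K` is large,
the convex function `max f (f e + δ + K (p - p e))` differs from `f` by at most `2δ` and has `e`
as its unique maximiser, which is an extreme point by convexity.

For the `G_δ` part, `O n` consists of the functions having a point beating every point at distance
`≥ 1 / (n + 1)` from it: this property is stable under uniformly small perturbations, and a
continuous function on a compact metric space has it for all `n` iff it has a unique maximiser.
-/

open Set

section IsAffOn

variable {S : Type*} [AddCommGroup S] [Module ℝ S] [TopologicalSpace S] {X : Set S}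
  {p q : S → ℝ}

lemma isAffOn_const (c : ℝ) : IsAffOn X fun _ => c :=
  ⟨continuousOn_const, fun _ _ _ _ t _ => by ring⟩

lemma IsAffOn.add (hp : IsAffOn X p) (hq : IsAffOn X q) : IsAffOn X (p + q) :=
  ⟨hp.1.add hq.1, fun a ha b hb t ht => by
    simp only [Pi.add_apply, hp.2 a ha b hb t ht, hq.2 a ha b hb t ht]; ring⟩

lemma IsAffOn.sub (hp : IsAffOn X p) (hq : IsAffOn X q) : IsAffOn X (p - q) :=
  ⟨hp.1.sub hq.1, fun a ha b hb t ht => by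
    simp only [Pi.sub_apply, hp.2 a ha b hb t ht, hq.2 a ha b hb t ht]; ring⟩

lemma IsAffOn.const_mul (hp : IsAffOn X p) (c : ℝ) : IsAffOn X fun x => c * p x :=
  ⟨continuousOn_const.mul hp.1, fun a ha b hb t ht => by
    dsimp only
    rw [hp.2 a ha b hb t ht]
    ring⟩

lemma ContinuousLinearMap.isAffOn (φ : S →L[ℝ] ℝ) : IsAffOn X φ :=
  ⟨φ.continuous.continuousOn, fun _ _ _ _ t _ => by simp⟩

lemma IsAffOn.convexOn (hp : IsAffOn X p) (hX : Convex ℝ X) : ConvexOn ℝ X p := by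
  refine ⟨hX, fun a ha b hb s t hs ht hst => le_of_eq ?_⟩
  obtain rfl : t = 1 - s := by linarith
  exact hp.2 a ha b hb s ⟨hs, by linarith⟩

end IsAffOn

lemma IsCompact.exists_pos_le_mul {α : Type*} [TopologicalSpace α] {s : Set α}
    (hs : IsCompact s) {h q : α → ℝ} (hh : ContinuousOn h s) (hq : ContinuousOn q s)
    (hpos : ∀ x ∈ s, 0 < q x) :
    ∃ K > 0, ∀ x ∈ s, h x ≤ K * q x := by
  obtain ⟨B, hB⟩ := hs.bddAbove_image (hh.div hq fun x hx => (hpos x hx).ne')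
  refine ⟨max B 1, by positivity, fun x hx => ?_⟩
  have : h x / q x ≤ max B 1 := (hB (mem_image_of_mem _ hx)).trans (le_max_left _ _)
  rwa [div_le_iff₀ (hpos x hx)] at this

section Separation

variable {S : Type*} [AddCommGroup S] [Module ℝ S] [TopologicalSpace S]
  [IsTopologicalAddGroup S] [ContinuousSMul ℝ S] [LocallyConvexSpace ℝ S] {X : Set S}

lemma exists_seq_strongDual_separating [T1Space S] (hX : IsCompact X)
    (hXmet : TopologicalSpace.MetrizableSpace X) :
    ∃ L : ℕ → S →L[ℝ] ℝ, ∀ x ∈ X, ∀ y ∈ X, x ≠ y → ∃ k, L k x ≠ L k y := by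
  have : CompactSpace X := isCompact_iff_compactSpace.mp hX
  let _ : MetricSpace X := TopologicalSpace.metrizableSpaceMetric X
  -- Hahn–Banach covers the off-diagonal of `X × X` by these open sets; take a countable subcover.
  set U : (S →L[ℝ] ℝ) → Set (X × X) := fun φ => {z | φ z.1 ≠ φ z.2}
  have hU : ∀ φ, IsOpen (U φ) := fun φ =>
    isOpen_ne_fun (φ.continuous.comp (continuous_subtype_val.comp continuous_fst))
      (φ.continuous.comp (continuous_subtype_val.comp continuous_snd))
  obtain ⟨T, hTc, hT⟩ := TopologicalSpace.isOpen_iUnion_countable U hU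
  obtain ⟨L, hL⟩ := (hTc.insert 0).exists_eq_range (insert_nonempty _ _)
  refine ⟨L, fun x hx y hy hxy => ?_⟩
  obtain ⟨φ, hφ⟩ := geometric_hahn_banach_point_point hxy
  have hmem : ((⟨x, hx⟩, ⟨y, hy⟩) : X × X) ∈ ⋃ φ ∈ T, U φ :=
    hT ▸ mem_iUnion.2 ⟨φ, hφ.ne⟩
  obtain ⟨ψ, hψT, hψ⟩ := mem_iUnion₂.1 hmem
  obtain ⟨k, rfl⟩ : ψ ∈ range L := hL ▸ mem_insert_of_mem _ hψT
  exact ⟨k, hψ⟩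

lemma exists_seq_strongDual_separating_bounded [T1Space S] (hX : IsCompact X)
    (hXmet : TopologicalSpace.MetrizableSpace X) :
    ∃ ℓ : ℕ → S →L[ℝ] ℝ, (∀ k, ∀ x ∈ X, |ℓ k x| ≤ (1 / 2) ^ k) ∧
      ∀ x ∈ X, ∀ y ∈ X, x ≠ y → ∃ k, ℓ k x ≠ ℓ k y := by
  obtain ⟨L, hL⟩ := exists_seq_strongDual_separating hX hXmet
  choose b hb using fun k => hX.exists_bound_of_continuousOn (L k).continuous.continuousOn
  have hc : ∀ k, 0 < (1 / 2 : ℝ) ^ k / (|b k| + 1) := fun k => by positivity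
  refine ⟨fun k => ((1 / 2 : ℝ) ^ k / (|b k| + 1)) • L k, fun k x hx => ?_,
    fun x hx y hy hxy => ?_⟩
  · have hLx : |L k x| ≤ |b k| + 1 := (hb k x hx).trans ((le_abs_self _).trans (by linarith))
    change |(1 / 2 : ℝ) ^ k / (|b k| + 1) * L k x| ≤ _
    rw [abs_mul, abs_of_pos (hc k), div_mul_eq_mul_div, div_le_iff₀ (by positivity)]
    gcongr
  · obtain ⟨k, hk⟩ := hL x hx y hy hxy
    exact ⟨k, fun h => hk (mul_left_cancel₀ (hc k).ne' h)⟩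

end Separation

section SeqPairing

variable {S : Type*} [AddCommGroup S] [Module ℝ S] [TopologicalSpace S]

noncomputable def seqPairing (ℓ : ℕ → S →L[ℝ] ℝ) (x y : S) : ℝ :=
  ∑' k, ℓ k x * ℓ k y

variable {X : Set S} {ℓ : ℕ → S →L[ℝ] ℝ} {x y e : S}

lemma norm_mul_le_of_bounded (hℓ : ∀ k, ∀ x ∈ X, |ℓ k x| ≤ (1 / 2) ^ k) (hx : x ∈ X)
    (hy : y ∈ X) (k : ℕ) : ‖ℓ k x * ℓ k y‖ ≤ (1 / 2) ^ k := by
  rw [Real.norm_eq_abs, abs_mul, ← mul_one ((1 / 2 : ℝ) ^ k)]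
  exact mul_le_mul (hℓ k x hx) ((hℓ k y hy).trans (pow_le_one₀ (by norm_num) (by norm_num)))
    (abs_nonneg _) (by positivity)

lemma summable_mul_of_bounded (hℓ : ∀ k, ∀ x ∈ X, |ℓ k x| ≤ (1 / 2) ^ k) (hx : x ∈ X)
    (hy : y ∈ X) : Summable fun k => ℓ k x * ℓ k y :=
  summable_geometric_two.of_norm_bounded (norm_mul_le_of_bounded hℓ hx hy)

lemma continuousOn_seqPairing (hℓ : ∀ k, ∀ x ∈ X, |ℓ k x| ≤ (1 / 2) ^ k) :
    ContinuousOn (fun z : S × S => seqPairing ℓ z.1 z.2) (X ×ˢ X) :=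
  continuousOn_tsum (fun k => (((ℓ k).continuous.comp continuous_fst).mul
      ((ℓ k).continuous.comp continuous_snd)).continuousOn)
    summable_geometric_two fun k _ hz => norm_mul_le_of_bounded hℓ hz.1 hz.2 k

lemma isAffOn_seqPairing (hℓ : ∀ k, ∀ x ∈ X, |ℓ k x| ≤ (1 / 2) ^ k) (he : e ∈ X) :
    IsAffOn X (seqPairing ℓ e) := by
  refine ⟨(continuousOn_seqPairing hℓ).comp (continuousOn_const.prodMk continuousOn_id)
    fun y hy => ⟨he, hy⟩, fun a ha b hb t _ => ?_⟩
  simp only [seqPairing, map_add, map_smul, smul_eq_mul, mul_add, mul_left_comm (ℓ _ e)]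
  rw [((summable_mul_of_bounded hℓ he ha).mul_left t).tsum_add
    ((summable_mul_of_bounded hℓ he hb).mul_left (1 - t)), tsum_mul_left, tsum_mul_left]

/-- `Q x = seqPairing ℓ x x` lies strictly above its tangent `y ↦ 2 seqPairing ℓ e y - Q e`. -/
lemma two_mul_seqPairing_sub_lt (hℓ : ∀ k, ∀ x ∈ X, |ℓ k x| ≤ (1 / 2) ^ k)
    (hsep : ∀ x ∈ X, ∀ y ∈ X, x ≠ y → ∃ k, ℓ k x ≠ ℓ k y) (he : e ∈ X) (hy : y ∈ X)
    (hne : y ≠ e) : 2 * seqPairing ℓ e y - seqPairing ℓ e e < seqPairing ℓ y y := by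
  obtain ⟨k, hk⟩ := hsep y hy e he hne
  have hsum : HasSum (fun k => (ℓ k y - ℓ k e) ^ 2)
      (seqPairing ℓ y y - (2 * seqPairing ℓ e y - seqPairing ℓ e e)) := by
    rw [show (fun k => (ℓ k y - ℓ k e) ^ 2) =
        fun k => ℓ k y * ℓ k y - (2 * (ℓ k e * ℓ k y) - ℓ k e * ℓ k e) from
      funext fun k => by ring]
    exact (summable_mul_of_bounded hℓ hy hy).hasSum.sub
      (((summable_mul_of_bounded hℓ he hy).hasSum.mul_left 2).sub
        (summable_mul_of_bounded hℓ he he).hasSum)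
  have hpos : 0 < (ℓ k y - ℓ k e) ^ 2 := by positivity [sub_ne_zero.2 hk]
  linarith [hasSum_lt (fun k => sq_nonneg (ℓ k y - ℓ k e)) hpos hasSum_zero hsum]

end SeqPairing

section Exposed

variable {S : Type*} [AddCommGroup S] [Module ℝ S] [TopologicalSpace S] {X : Set S}

def IsAffExposed (X : Set S) (e : S) : Prop :=
  ∃ p : S → ℝ, IsAffOn X p ∧ ∀ y ∈ X, y ≠ e → p y < p e

lemma exists_isAffExposed_not_mem [IsTopologicalAddGroup S] [ContinuousSMul ℝ S]
    [LocallyConvexSpace ℝ S] (hX : IsCompact X) {ℓ : ℕ → S →L[ℝ] ℝ}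
    (hℓ : ∀ k, ∀ x ∈ X, |ℓ k x| ≤ (1 / 2) ^ k)
    (hsep : ∀ x ∈ X, ∀ y ∈ X, x ≠ y → ∃ k, ℓ k x ≠ ℓ k y) {C : Set S} (hC : Convex ℝ C)
    (hCc : IsClosed C) {x₀ : S} (hx₀ : x₀ ∈ X) (hx₀C : x₀ ∉ C) :
    ∃ e ∈ X, e ∉ C ∧ IsAffExposed X e := by
  obtain ⟨φ, u, hφx₀, hφC⟩ := geometric_hahn_banach_point_closed hC hCc hx₀C
  set Q : S → ℝ := fun x => seqPairing ℓ x x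
  have hQ : ContinuousOn Q X := (continuousOn_seqPairing hℓ).comp
    (continuousOn_id.prodMk continuousOn_id) fun x hx => ⟨hx, hx⟩
  obtain ⟨R, hR⟩ := hX.exists_bound_of_continuousOn hQ
  have hR₀ : 0 ≤ R := (norm_nonneg _).trans (hR x₀ hx₀)
  set t := (2 * R + 1) / (u - φ x₀)
  have ht : t * (u - φ x₀) = 2 * R + 1 := div_mul_cancel₀ _ (by linarith)
  have ht₀ : 0 < t := div_pos (by linarith) (by linarith)
  obtain ⟨e, he, hmax⟩ := hX.exists_isMaxOn ⟨x₀, hx₀⟩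
    (hQ.sub (continuousOn_const.mul φ.continuous.continuousOn) :
      ContinuousOn (fun x => Q x - t * φ x) X)
  refine ⟨e, he, fun heC => ?_, (fun y => 2 * seqPairing ℓ e y) - fun y => t * φ y,
    ((isAffOn_seqPairing hℓ he).const_mul 2).sub (φ.isAffOn.const_mul t), fun y hy hne => ?_⟩
  · have hx₀e : Q x₀ - t * φ x₀ ≤ Q e - t * φ e := hmax hx₀
    have : 0 < t * (φ e - u) := mul_pos ht₀ (by linarith [hφC e heC])
    linarith [abs_le.1 (hR e he), abs_le.1 (hR x₀ hx₀)]
  · have hye : Q y - t * φ y ≤ Q e - t * φ e := hmax hy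
    have := two_mul_seqPairing_sub_lt hℓ hsep he hy hne
    simp only [Pi.sub_apply]
    linarith

variable {f : S → ℝ} {e : S} {δ : ℝ}

lemma IsAffExposed.exists_strictMax_near (hexp : IsAffExposed X e) (hX : IsCompact X)
    (hf : ConvexOn ℝ X f) (hfc : ContinuousOn f X) (hδ : 0 < δ)
    (hfe : ∀ y ∈ X, f y < f e + δ) :
    ∃ g : S → ℝ, ConvexOn ℝ X g ∧ ContinuousOn g X ∧ (∀ y ∈ X, y ≠ e → g y < g e) ∧
      ∀ x ∈ X, |f x - g x| ≤ 2 * δ := by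
  obtain ⟨p, hp, hpe⟩ := hexp
  have hpe' : ∀ y ∈ X, p y ≤ p e := fun y hy =>
    (eq_or_ne y e).elim (fun h => h ▸ le_rfl) fun h => (hpe y hy h).le
  obtain ⟨K, hK, hKC⟩ :=
    (hfc.lowerSemicontinuousOn.isCompact_inter_preimage_Iic hX _).exists_pos_le_mul
    (h := fun x => f e + δ - f x) (q := fun x => p e - p x)
    (continuousOn_const.sub (hfc.mono inter_subset_left))
    (continuousOn_const.sub (hp.1.mono inter_subset_left))
    fun x hx => sub_pos.2 (hpe x hx.1 fun h => by
      have : f x ≤ f e - δ := hx.2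
      rw [h] at this
      linarith)
  set a : S → ℝ := (fun x => K * p x) + fun _ => f e + δ - K * p e
  have ha : IsAffOn X a := (hp.const_mul K).add (isAffOn_const _)
  have hae : a e = f e + δ := by simp only [a, Pi.add_apply]; ring
  refine ⟨f ⊔ a, hf.sup (ha.convexOn hf.1), hfc.sup ha.1, fun y hy hne => ?_, fun x hx => ?_⟩
  · have : a y < a e := by
      simp only [a, Pi.add_apply]
      linarith [mul_lt_mul_of_pos_left (hpe y hy hne) hK]
    show f y ⊔ a y < f e ⊔ a e
    rw [sup_eq_right.2 (by linarith : f e ≤ a e), sup_lt_iff]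
    exact ⟨hae ▸ hfe y hy, this⟩
  · rw [Pi.sup_apply, abs_sub_comm, abs_of_nonneg (sub_nonneg.2 le_sup_left), sub_le_iff_le_add,
      sup_le_iff]
    refine ⟨by linarith, ?_⟩
    simp only [a, Pi.add_apply]
    by_cases hxC : f x ≤ f e - δ
    · linarith [hKC x ⟨hx, hxC⟩]
    · linarith [mul_le_mul_of_nonneg_left (hpe' x hx) hK.le]

end Exposed

lemma exists_strictMax_near {S : Type*} [AddCommGroup S] [Module ℝ S] [TopologicalSpace S]
    [IsTopologicalAddGroup S] [ContinuousSMul ℝ S] [LocallyConvexSpace ℝ S] [T2Space S]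
    {X : Set S} (hXne : X.Nonempty) (hX : IsCompact X)
    (hXmet : TopologicalSpace.MetrizableSpace X) {f : S → ℝ} (hf : ConvexOn ℝ X f)
    (hfc : ContinuousOn f X) {δ : ℝ} (hδ : 0 < δ) :
    ∃ g : S → ℝ, ∃ e ∈ X, ConvexOn ℝ X g ∧ ContinuousOn g X ∧
      (∀ y ∈ X, y ≠ e → g y < g e) ∧ ∀ x ∈ X, |f x - g x| ≤ 2 * δ := by
  obtain ⟨ℓ, hℓ, hsep⟩ := exists_seq_strongDual_separating_bounded hX hXmet
  obtain ⟨x₀, hx₀, hmax⟩ := hX.exists_isMaxOn hXne hfc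
  have hC : IsCompact (X ∩ f ⁻¹' Iic (f x₀ - δ)) :=
    hfc.lowerSemicontinuousOn.isCompact_inter_preimage_Iic hX _
  obtain ⟨e, he, heC, hexp⟩ := exists_isAffExposed_not_mem hX hℓ hsep (hf.convex_le _)
    hC.isClosed hx₀ fun h => by linarith [(h.2 : f x₀ ≤ f x₀ - δ)]
  have hfe : ∀ y ∈ X, f y < f e + δ := fun y hy => by
    have hfy : f y ≤ f x₀ := hmax hy
    have hx₀e : f x₀ - δ < f e := lt_of_not_ge fun h => heC ⟨he, h⟩
    linarith
  obtain ⟨g, hg⟩ := hexp.exists_strictMax_near hX hf hfc hδ hfe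
  exact ⟨g, e, he, hg⟩

lemma ConvexOn.extremeIn_of_forall_lt {S : Type*} [AddCommGroup S] [Module ℝ S] {X : Set S}
    {f : S → ℝ} {e : S} (hf : ConvexOn ℝ X f) (he : e ∈ X)
    (hmax : ∀ y ∈ X, y ≠ e → f y < f e) : ExtremeIn X e := by
  have hle : ∀ y ∈ X, f y ≤ f e := fun y hy =>
    (eq_or_ne y e).elim (fun h => h ▸ le_rfl) fun h => (hmax y hy h).le
  refine ⟨he, fun y hy z hz α hα₀ hα₁ hyz => ?_⟩
  have hjensen := hf.2 hy hz hα₀.le (sub_nonneg.2 hα₁.le) (add_sub_cancel α 1)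
  rw [← hyz, smul_eq_mul, smul_eq_mul] at hjensen
  by_contra hne
  rcases not_and_or.1 hne with h | h
  · nlinarith [hmax y hy (Ne.symm h), hle z hz]
  · nlinarith [hmax z hz (Ne.symm h), hle y hy]

section rhoOn

variable {S : Type*} {X : Set S} {f g : S → ℝ}

lemma rhoOn_le {δ : ℝ} (hδ : 0 ≤ δ) (h : ∀ x ∈ X, |f x - g x| ≤ δ) : rhoOn X f g ≤ δ :=
  Real.iSup_le (fun x => (div_le_self (abs_nonneg _)
    (le_add_of_nonneg_right (abs_nonneg _))).trans (h x x.2)) hδ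

lemma abs_sub_lt_of_rhoOn_lt {η : ℝ} (hη : 0 < η) (h : rhoOn X f g < η / (1 + η)) {x : S}
    (hx : x ∈ X) : |f x - g x| < η := by
  have hbdd : BddAbove (range fun x : X => |f x - g x| / (1 + |f x - g x|)) :=
    ⟨1, by
      rintro _ ⟨y, rfl⟩
      exact div_le_one_of_le₀ (by linarith [abs_nonneg (f y - g y)]) (by positivity)⟩
  have hx' := (le_ciSup hbdd ⟨x, hx⟩).trans_lt h
  rw [div_lt_div_iff₀ (by positivity) (by positivity)] at hx'
  nlinarith

end rhoOn

section StrictMax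

variable {K : Type*} {F : K → ℝ}

def HasStrictMaxUpTo [PseudoMetricSpace K] (r : ℝ) (F : K → ℝ) : Prop :=
  ∃ x, ∀ y, r ≤ dist y x → F y < F x

lemma HasStrictMaxUpTo.exists_stable [PseudoMetricSpace K] [CompactSpace K] {r : ℝ}
    (hF : Continuous F) (h : HasStrictMaxUpTo r F) :
    ∃ η > 0, ∀ G : K → ℝ, (∀ y, |F y - G y| < η) → HasStrictMaxUpTo r G := by
  obtain ⟨x, hx⟩ := h
  obtain ⟨c, hc, hcF⟩ := (isClosed_le continuous_const
      (continuous_id.dist continuous_const)).isCompact.exists_pos_le_mul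
    (h := fun _ => 1) (q := fun y => F x - F y) continuousOn_const
    (continuous_const.sub hF).continuousOn fun y hy => sub_pos.2 (hx y hy)
  refine ⟨c⁻¹ / 2, by positivity, fun G hG => ⟨x, fun y hy => ?_⟩⟩
  have hgap : c⁻¹ ≤ F x - F y := by
    rw [inv_eq_one_div, div_le_iff₀ hc]
    linarith [hcF y hy]
  linarith [abs_lt.1 (hG x), abs_lt.1 (hG y)]

lemma forall_hasStrictMaxUpTo_iff [MetricSpace K] [CompactSpace K] (hF : Continuous F) :
    (∀ n : ℕ, HasStrictMaxUpTo (1 / (n + 1)) F) ↔ ∃ x, ∀ y, y ≠ x → F y < F x := by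
  constructor
  · intro h
    obtain ⟨x₀, -⟩ := h 0
    obtain ⟨m, -, hm⟩ := isCompact_univ.exists_isMaxOn ⟨x₀, mem_univ _⟩ hF.continuousOn
    have hnear : ∀ n : ℕ, ∃ x, ∀ z, F m ≤ F z → dist z x < 1 / (n + 1) := fun n =>
      let ⟨x, hx⟩ := h n
      ⟨x, fun z hz => not_le.1 fun hle => (hx z hle).not_ge ((hm (mem_univ x)).trans hz)⟩
    refine ⟨m, fun y hy => (hm (mem_univ y)).lt_of_ne fun hFy =>
      hy (eq_of_forall_dist_le fun ε hε => ?_)⟩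
    obtain ⟨n, hn⟩ := exists_nat_one_div_lt (half_pos hε)
    obtain ⟨x, hx⟩ := hnear n
    linarith [dist_triangle_right y m x, hx y hFy.ge, hx m le_rfl]
  · rintro ⟨x, hx⟩ n
    refine ⟨x, fun y hy => hx y ?_⟩
    rintro rfl
    rw [dist_self] at hy
    exact absurd hy (not_le.2 (by positivity))

end StrictMax

theorem stmt16_general {S : Type*} [AddCommGroup S] [Module ℝ S] [TopologicalSpace S]
    [IsTopologicalAddGroup S] [ContinuousSMul ℝ S] [LocallyConvexSpace ℝ S] [T2Space S]
    (X : Set S) (hXne : X.Nonempty) (hXcomp : IsCompact X)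
    (hXmet : TopologicalSpace.MetrizableSpace X)
    (B : Set (S → ℝ)) (hBdef : B = {f | ConvexOn ℝ X f ∧ ContinuousOn f X})
    (G : Set (S → ℝ)) (hGdef : G = {f ∈ B | ∃ e ∈ X,
      (∀ y ∈ X, y ≠ e → f y < f e) ∧ ExtremeIn X e}) :
    ((∀ f ∈ B, ∀ ε > (0:ℝ), ∃ g ∈ G, rhoOn X f g < ε) ∧
      ∃ O : ℕ → Set (S → ℝ),
        (∀ n, O n ⊆ B ∧ ∀ f ∈ O n, ∃ ε > (0:ℝ), ∀ g ∈ B, rhoOn X f g < ε → g ∈ O n) ∧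
        G = ⋂ n, O n) := by
  subst hBdef hGdef
  let _ : MetricSpace X := TopologicalSpace.metrizableSpaceMetric X
  have : CompactSpace X := isCompact_iff_compactSpace.mp hXcomp
  refine ⟨fun f ⟨hf, hfc⟩ ε hε => ?_, fun n => {f | (ConvexOn ℝ X f ∧ ContinuousOn f X) ∧
    HasStrictMaxUpTo (1 / (n + 1)) (X.domRestrict f)}, fun n => ⟨fun f hf => hf.1, ?_⟩, ?_⟩
  · obtain ⟨g, e, he, hg, hgc, hmax, hfg⟩ :=
      exists_strictMax_near hXne hXcomp hXmet hf hfc (by positivity : (0 : ℝ) < ε / 4)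
    exact ⟨g, ⟨⟨hg, hgc⟩, e, he, hmax, hg.extremeIn_of_forall_lt he hmax⟩,
      (rhoOn_le (by positivity) hfg).trans_lt (by linarith)⟩
  · rintro f ⟨hfB, hfmax⟩
    obtain ⟨η, hη, hstable⟩ := hfmax.exists_stable hfB.2.domRestrict
    exact ⟨η / (1 + η), by positivity, fun g hgB hfg =>
      ⟨hgB, hstable _ fun y => abs_sub_lt_of_rhoOn_lt hη hfg y.2⟩⟩
  · ext f
    simp only [mem_ofPred_eq, mem_iInter]
    constructor
    · rintro ⟨hfB, e, he, hmax, -⟩ n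
      exact ⟨hfB, (forall_hasStrictMaxUpTo_iff hfB.2.domRestrict).2
        ⟨⟨e, he⟩, fun y hy => hmax y y.2 (Subtype.coe_ne_coe.2 hy)⟩ n⟩
    · intro h
      obtain ⟨⟨e, he⟩, hmax⟩ :=
        (forall_hasStrictMaxUpTo_iff (h 0).1.2.domRestrict).1 fun n => (h n).2
      have hmax' : ∀ y ∈ X, y ≠ e → f y < f e := fun y hy hne =>
        hmax ⟨y, hy⟩ (Subtype.coe_ne_coe.1 hne)
      exact ⟨(h 0).1, e, he, hmax', (h 0).1.1.extremeIn_of_forall_lt he hmax'⟩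

theorem stmt16 {S : Type*} [AddCommGroup S] [Module ℝ S] [TopologicalSpace S]
    [IsTopologicalAddGroup S] [ContinuousSMul ℝ S] [LocallyConvexSpace ℝ S] [T2Space S]
    (X : Set S) (hXne : X.Nonempty) (hXconv : Convex ℝ X) (hXcomp : IsCompact X)
    (hXmet : TopologicalSpace.MetrizableSpace X)
    (B : Set (S → ℝ)) (hBdef : B = {f | ConvexOn ℝ X f ∧ ContinuousOn f X})
    (G : Set (S → ℝ)) (hGdef : G = {f ∈ B | ∃ e ∈ X,
      (∀ y ∈ X, y ≠ e → f y < f e) ∧ ExtremeIn X e}) :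
    ((∀ f ∈ B, ∀ ε > (0:ℝ), ∃ g ∈ G, rhoOn X f g < ε) ∧
      ∃ O : ℕ → Set (S → ℝ),
        (∀ n, O n ⊆ B ∧ ∀ f ∈ O n, ∃ ε > (0:ℝ), ∀ g ∈ B, rhoOn X f g < ε → g ∈ O n) ∧
        G = ⋂ n, O n) :=
  stmt16_general X hXne hXcomp hXmet B hBdef G hGdef
end

section
/- Let X be a nonempty convex compact metrizable subset of a Hausdorff locally convex topological vector space, and x ∈ X. Let Ω_x be the set of convex upper semicontinuous functions f : X → ℝ with f(x) = max_X f. Then there exists an extreme point e of X such that every f ∈ Ω_x satisfies f(e) = max_X f. -/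
/-!
The common maximizers of all `f ∈ Ω` form a closed subset of `X` containing `x`, hence a nonempty
compact set. It is a face of `X`: a convex function that attains its maximum at an interior point
of a segment also attains it at the endpoints. By Krein–Milman this face has an extreme point, and
an extreme point of a face of `X` is an extreme point of `X`.
-/

open Set

theorem extremeIn_of_mem_extremePoints {E : Type*} [AddCommGroup E] [Module ℝ E]
    {K : Set E} {e : E} (he : e ∈ K.extremePoints ℝ) : ExtremeIn K e := by
  refine ⟨he.1, fun y hy z hz α hα0 hα1 heq => ?_⟩
  have hseg : e ∈ openSegment ℝ y z := ⟨α, 1 - α, hα0, by linarith, by ring, heq.symm⟩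
  obtain ⟨rfl, rfl⟩ := (mem_extremePoints.1 he).2 y hy z hz hseg
  exact ⟨rfl, rfl⟩

theorem ConvexOn.isExtreme_kmaxOn {E : Type*} [AddCommGroup E] [Module ℝ E]
    {X : Set E} {f : E → ℝ} (hf : ConvexOn ℝ X f) : IsExtreme ℝ X (KmaxOn X f) := by
  refine ⟨sep_subset _ _, fun y₁ hy₁ y₂ hy₂ z hz hseg => ⟨hy₁, fun w hw => ?_⟩⟩
  exact (hz.2 w hw).trans (hf.le_left_of_right_le hy₁ hy₂ hseg (hz.2 y₂ hy₂))

theorem UpperSemicontinuousOn.isClosed_kmaxOn {α : Type*} [TopologicalSpace α]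
    {X : Set α} {f : α → ℝ} (hf : UpperSemicontinuousOn f X) (hX : IsClosed X) :
    IsClosed (KmaxOn X f) := by
  have hypograph := (upperSemicontinuousOn_iff_isClosed_hypograph hX).1 hf
  have hmax : KmaxOn X f =
      X ∩ ⋂ y ∈ X, (fun z => (z, f y)) ⁻¹' {p : α × ℝ | p.1 ∈ X ∧ p.2 ≤ f p.1} := by
    ext z
    simp only [KmaxOn, mem_ofPred_eq, mem_inter_iff, mem_iInter, mem_preimage]
    exact ⟨fun h => ⟨h.1, fun y hy => ⟨h.1, h.2 y hy⟩⟩, fun h => ⟨h.1, fun y hy => (h.2 y hy).2⟩⟩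
  rw [hmax]
  exact hX.inter (isClosed_biInter fun y _ => hypograph.preimage (by fun_prop))

theorem stmt17_general {S : Type*} [AddCommGroup S] [Module ℝ S] [TopologicalSpace S]
    [IsTopologicalAddGroup S] [ContinuousSMul ℝ S] [LocallyConvexSpace ℝ S] [T2Space S]
    (X : Set S) (hXcomp : IsCompact X)
    (x : S) (hx : x ∈ X)
    (Ω : Set (S → ℝ)) (hΩdef : Ω = {f | ConvexOn ℝ X f ∧
      UpperSemicontinuousOn f X ∧ ∀ y ∈ X, f y ≤ f x}) :
    ∃ e, ExtremeIn X e ∧ ∀ f ∈ Ω, ∀ y ∈ X, f y ≤ f e := by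
  have hΩ : ∀ f ∈ Ω, ConvexOn ℝ X f ∧ UpperSemicontinuousOn f X ∧ ∀ y ∈ X, f y ≤ f x :=
    fun f hf => by rwa [hΩdef] at hf
  -- `X` keeps the family nonempty when `Ω` is empty.
  let F : Set (Set S) := insert X (KmaxOn X '' Ω)
  have hF_extreme : ∀ B ∈ F, IsExtreme ℝ X B :=
    forall_mem_insert.2 ⟨IsExtreme.rfl,
      forall_mem_image.2 fun f hf => (hΩ f hf).1.isExtreme_kmaxOn⟩
  have hF_closed : ∀ B ∈ F, IsClosed B :=
    forall_mem_insert.2 ⟨hXcomp.isClosed,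
      forall_mem_image.2 fun f hf => (hΩ f hf).2.1.isClosed_kmaxOn hXcomp.isClosed⟩
  have hx_mem : x ∈ ⋂₀ F :=
    mem_sInter.2 <| forall_mem_insert.2 ⟨hx, forall_mem_image.2 fun f hf => ⟨hx, (hΩ f hf).2.2⟩⟩
  have hcomp : IsCompact (⋂₀ F) :=
    hXcomp.of_isClosed_subset (isClosed_sInter hF_closed) (sInter_subset_of_mem (mem_insert _ _))
  obtain ⟨e, he⟩ := hcomp.extremePoints_nonempty ⟨x, hx_mem⟩
  have heX : e ∈ X.extremePoints ℝ :=
    (isExtreme_sInter ⟨X, mem_insert _ _⟩ hF_extreme).extremePoints_subset_extremePoints he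
  exact ⟨e, extremeIn_of_mem_extremePoints heX,
    fun f hf => (mem_sInter.1 he.1 _ (mem_insert_of_mem _ (mem_image_of_mem _ hf))).2⟩

theorem stmt17 {S : Type*} [AddCommGroup S] [Module ℝ S] [TopologicalSpace S]
    [IsTopologicalAddGroup S] [ContinuousSMul ℝ S] [LocallyConvexSpace ℝ S] [T2Space S]
    (X : Set S) (hXne : X.Nonempty) (hXconv : Convex ℝ X) (hXcomp : IsCompact X)
    (hXmet : TopologicalSpace.MetrizableSpace X)
    (x : S) (hx : x ∈ X)
    (Ω : Set (S → ℝ)) (hΩdef : Ω = {f | ConvexOn ℝ X f ∧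
      UpperSemicontinuousOn f X ∧ ∀ y ∈ X, f y ≤ f x}) :
    ∃ e, ExtremeIn X e ∧ ∀ f ∈ Ω, ∀ y ∈ X, f y ≤ f e :=
  stmt17_general X hXcomp x hx Ω hΩdef
end
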